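/- arXiv:2304.12740 — 3 statements merged into one kernel-verified Lean document; each statement's English description precedes it below -/
import Mathlib

section
/- Let G = H □ K₂^{□t} and let (G,p) be a bar-joint framework in ℝ^d with t-fold extrusion symmetry with extrusion directions τ₁,…,τ_t, and let θ: ℤ₂^t → Aut(G) be the extrusion action. Then the rigidity matrix R(G,p) is a ℤ₂^t-linear map of the external and internal representations, i.e. R(G,p)·(P_V ⊗ I_d)(γ) = P′_E(γ)·R(G,p) for every γ ∈ ℤ₂^t. -/
/-!
STATEMENT 0: For a bar-joint framework `(G,p)` in `ℝ^d` with `t`-fold extrusion symmetry,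
where `G = H □ K₂^{□t}`, the rigidity matrix intertwines the external representation
`P_V ⊗ I_d` and the internal (signed edge permutation) representation `P′_E` of `ℤ₂^t`:
`R(G,p)·(P_V ⊗ I_d)(γ) = P′_E(γ)·R(G,p)` for every `γ`.

This is expressed row-wise: for every edge `{i,j}` of `G`, every `γ ∈ ℤ₂^t` and every
velocity assignment `q`, the `{i,j}`-entry of `R(G,p)` applied to `(P_V ⊗ I_d)(γ) q`
equals the sign `intSign γ i j` (the `(e, γe)`-entry of `P′_E(γ)`) times the
`γ{i,j}`-entry of `R(G,p)` applied to `q`.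
-/

open Matrix
open scoped Classical

/-- The group `ℤ₂^t`. -/
abbrev Zkt (t : ℕ) := Fin t → ZMod 2

/-- The vertex set of `G = H □ K₂^{□t}`, where `VH` is the vertex set of `H`. -/
abbrev Vert (VH : Type*) (t : ℕ) := VH × Zkt t

/-- The extrusion action of `γ ∈ ℤ₂^t` on the vertices of `G = H □ K₂^{□t}`:
`θ(γ)(v,e) = (v, e + γ)`. -/
def theta {VH : Type*} {t : ℕ} (γ : Zkt t) (i : Vert VH t) : Vert VH t :=
  (i.1, i.2 + γ)

/-- Adjacency in the Cartesian product `G = H □ K₂^{□t}`: two vertices are adjacent iff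
they are at the same level `e` and adjacent in `H`, or they are copies of the same
vertex of `H` at levels differing in exactly one coordinate. -/
def ExtAdj {VH : Type*} {t : ℕ} (Adj : VH → VH → Prop) (i j : Vert VH t) : Prop :=
  (Adj i.1 j.1 ∧ i.2 = j.2) ∨
    (i.1 = j.1 ∧ ∃ h, i.2 h ≠ j.2 h ∧ ∀ h', h' ≠ h → i.2 h' = j.2 h')

/-- `t`-fold extrusion symmetry of a bar-joint framework `(G,p)` in `ℝ^d` with
extrusion directions `τ₁, …, τ_t ∈ ℝ^d \ {0}`:  `p(v,e) = p(v,𝟎) + T·eᵀ`. -/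
def ExtrusionSymmetric {VH : Type*} {t d : ℕ} (τ : Fin t → Fin d → ℝ)
    (p : Vert VH t → Fin d → ℝ) : Prop :=
  (∀ h, τ h ≠ 0) ∧
    ∀ (v : VH) (e : Zkt t), p (v, e) = p (v, 0) + ∑ h, (((e h).val : ℝ)) • τ h

/-- The sign attached by the internal representation `P′_E(γ)` to an edge `{i,j}`:
it is `-1` exactly when `i = (v,𝐞)`, `j = (v,𝐞′)` differ in one coordinate `h`
and `γ` has a `1` in the `h`-th coordinate, and `+1` otherwise. -/
noncomputable def intSign {VH : Type*} {t : ℕ} (γ : Zkt t) (i j : Vert VH t) : ℝ :=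
  ∏ h, (-1 : ℝ) ^ ((i.2 h + j.2 h).val * (γ h).val)

/-!
Extrusion symmetry gives `p(v,e) - p(w,e') = p(v,0) - p(w,0) + ∑ₕ (eₕ - e'ₕ) τₕ`.
On an edge inside one level (`e = e'`) this does not depend on the level, so translating
by `γ` changes nothing. On an edge between two copies of a vertex (`v = w`, levels
differing only at `h₀`) it is `±τₕ₀`, and adding `γ` flips the sign exactly when
`γ h₀ = 1`. So on every edge `p i - p j = intSign γ i j • (p (γ i) - p (γ j))`, which is
the row-wise intertwining identity.
-/

lemma ZMod.val_sub_val_eq_neg_one_pow_mul (a b c : ZMod 2) :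
    ((a.val : ℝ) - b.val) =
      (-1) ^ ((a + b).val * c.val) * (((a + c).val : ℝ) - (b + c).val) := by
  have key : ∀ a b c : ZMod 2, ((a.val : ℤ) - b.val) =
      (-1) ^ ((a + b).val * c.val) * (((a + c).val : ℤ) - (b + c).val) := by decide
  exact_mod_cast key a b c

section

variable {VH : Type*} {t : ℕ}

lemma theta_mk (γ : Zkt t) (v : VH) (e : Zkt t) : theta γ (v, e) = (v, e + γ) :=
  rfl

lemma intSign_mk_of_snd_eq (γ : Zkt t) (v w : VH) (e : Zkt t) :
    intSign γ (v, e) (w, e) = 1 := by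
  simp [intSign, CharTwo.add_self_eq_zero]

lemma intSign_mk_of_eqOn (γ : Zkt t) (v w : VH) {e e' : Zkt t} {h₀ : Fin t}
    (hee' : ∀ h ≠ h₀, e h = e' h) :
    intSign γ (v, e) (w, e') = (-1) ^ ((e h₀ + e' h₀).val * (γ h₀).val) :=
  Finset.prod_eq_single h₀ (fun h _ hh => by simp [hee' h hh, CharTwo.add_self_eq_zero])
    (by simp)

end

namespace ExtrusionSymmetric

variable {VH : Type*} {t d : ℕ} {τ : Fin t → Fin d → ℝ} {p : Vert VH t → Fin d → ℝ}

lemma sub_eq_sub_zero_add_sum (hp : ExtrusionSymmetric τ p) (v w : VH) (e e' : Zkt t) :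
    p (v, e) - p (w, e') =
      (p (v, 0) - p (w, 0)) + ∑ h, (((e h).val : ℝ) - (e' h).val) • τ h := by
  rw [hp.2 v e, hp.2 w e']
  simp only [sub_smul, Finset.sum_sub_distrib]
  abel

lemma sub_eq_of_snd_eq (hp : ExtrusionSymmetric τ p) (v w : VH) (e : Zkt t) :
    p (v, e) - p (w, e) = p (v, 0) - p (w, 0) := by
  rw [hp.sub_eq_sub_zero_add_sum]
  simp

lemma sub_eq_of_eqOn (hp : ExtrusionSymmetric τ p) (v : VH) {e e' : Zkt t} {h₀ : Fin t}
    (hee' : ∀ h ≠ h₀, e h = e' h) :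
    p (v, e) - p (v, e') = (((e h₀).val : ℝ) - (e' h₀).val) • τ h₀ := by
  rw [hp.sub_eq_sub_zero_add_sum, sub_self, zero_add]
  exact Finset.sum_eq_single h₀ (fun h _ hh => by simp [hee' h hh]) (by simp)

lemma sub_eq_intSign_smul_sub_theta (hp : ExtrusionSymmetric τ p) {Adj : VH → VH → Prop}
    (γ : Zkt t) {i j : Vert VH t} (hij : ExtAdj Adj i j) :
    p i - p j = intSign γ i j • (p (theta γ i) - p (theta γ j)) := by
  obtain ⟨v, e⟩ := i
  obtain ⟨w, e'⟩ := j
  rcases hij with ⟨-, hee' : e = e'⟩ |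
    ⟨hvw : v = w, h₀, -, hee' : ∀ h ≠ h₀, e h = e' h⟩
  · subst hee'
    rw [intSign_mk_of_snd_eq, one_smul, theta_mk, theta_mk, hp.sub_eq_of_snd_eq,
      hp.sub_eq_of_snd_eq v w (e + γ)]
  · subst hvw
    have hee'γ : ∀ h ≠ h₀, (e + γ) h = (e' + γ) h := fun h hh => by simp [hee' h hh]
    rw [intSign_mk_of_eqOn γ v v hee', theta_mk, theta_mk, hp.sub_eq_of_eqOn v hee',
      hp.sub_eq_of_eqOn v hee'γ, smul_smul, Pi.add_apply, Pi.add_apply,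
      ZMod.val_sub_val_eq_neg_one_pow_mul _ _ (γ h₀)]

end ExtrusionSymmetric

theorem rigidity_intertwines_extrusion_reps_general
    {VH : Type*} {t d : ℕ}
    (Adj : VH → VH → Prop)
    (τ : Fin t → Fin d → ℝ) (p : Vert VH t → Fin d → ℝ)
    (hp : ExtrusionSymmetric τ p) :
    ∀ (γ : Zkt t) (q : Vert VH t → Fin d → ℝ) (i j : Vert VH t), ExtAdj Adj i j →
      (p i - p j) ⬝ᵥ (q (theta γ i) - q (theta γ j)) =
        intSign γ i j *
          ((p (theta γ i) - p (theta γ j)) ⬝ᵥ (q (theta γ i) - q (theta γ j))) := by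
  intro γ q i j hij
  rw [hp.sub_eq_intSign_smul_sub_theta γ hij, smul_dotProduct, smul_eq_mul]

/-- **Theorem 2.3**: the rigidity matrix of a `t`-fold extrusion-symmetric framework is a
`ℤ₂^t`-linear map of the external and internal representations. -/
theorem rigidity_intertwines_extrusion_reps
    {VH : Type*} [Fintype VH] {t d : ℕ}
    (Adj : VH → VH → Prop) (hAdjSymm : ∀ u v, Adj u v → Adj v u)
    (τ : Fin t → Fin d → ℝ) (p : Vert VH t → Fin d → ℝ)
    (hp : ExtrusionSymmetric τ p) :
    ∀ (γ : Zkt t) (q : Vert VH t → Fin d → ℝ) (i j : Vert VH t), ExtAdj Adj i j →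
      (p i - p j) ⬝ᵥ (q (theta γ i) - q (theta γ j)) =
        intSign γ i j *
          ((p (theta γ i) - p (theta γ j)) ⬝ᵥ (q (theta γ i) - q (theta γ j))) :=
  rigidity_intertwines_extrusion_reps_general Adj τ p hp
end

section
/- Let (G,p,ℓ) be a point-hyperplane framework in ℝ^d, let S be a real invertible d×d skew-symmetric matrix, and let T be the block-diagonal (d|V_P|+(d+1)|V_H|) × (d|V_P|+(d+1)|V_H|) matrix whose block for each point vertex i ∈ V_P is S and whose block for each hyperplane vertex i ∈ V_H is S augmented with a final row (0,…,0,1) and final column (0,…,0,1)ᵀ. Then there exists λ_c ∈ ℝ⁺ such that rank R(G, (I+λT)(p,ℓ)) = rank R(G,p,ℓ) for all |λ| < λ_c. -/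
/-!
STATEMENT 2: For a point-hyperplane framework `(G,p,ℓ)` in `ℝ^d`, an invertible
skew-symmetric `d×d` matrix `S`, and the block-diagonal matrix `T` whose block for each
point vertex is `S` and whose block for each hyperplane vertex is `S` augmented by a
final row `(0,…,0,1)` and a final column `(0,…,0,1)ᵀ` (so `T` maps a point `p` to `Sp`
and a hyperplane `(a,r)` to `(Sa, r)`), there is a `λ_c > 0` such that
`rank R(G,(I+λT)(p,ℓ)) = rank R(G,p,ℓ)` for all `|λ| < λ_c`.

The point-hyperplane rigidity matrix is modelled as the map sending an infinitesimal
motion `q = (ṗ, (ȧ, ṙ))` to the vector of first-order constraint values: one row per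
point-point edge, point-hyperplane edge, hyperplane-hyperplane (angle) edge, and one
normalisation row per hyperplane vertex; its rank is the dimension of its range.
-/

open Matrix
open scoped Classical

/-- Configuration space of a point-hyperplane framework in `ℝ^d`:
a point in `ℝ^d` for each vertex in `V_P` and a pair `(a, r) ∈ ℝ^d × ℝ`
for each vertex in `V_H`. -/
abbrev PHCfg (d : ℕ) (VP VH : Type*) := (VP → Fin d → ℝ) × (VH → (Fin d → ℝ) × ℝ)

/-- Row indices of the point-hyperplane rigidity matrix: point-point pairs,
point-hyperplane pairs, hyperplane-hyperplane pairs, and one normalisation row per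
hyperplane vertex. -/
abbrev PHRow (VP VH : Type*) := (VP × VP) ⊕ (VP × VH) ⊕ (VH × VH) ⊕ VH

/-- The point-hyperplane rigidity matrix of `(G, c)`, as the (linear-in-`q`) map taking a
candidate infinitesimal motion `q` to the tuple of its first-order constraint values. -/
noncomputable def phRig {d : ℕ} {VP VH : Type*}
    (Rpp : VP → VP → Prop) (Rph : VP → VH → Prop) (Rhh : VH → VH → Prop)
    (c q : PHCfg d VP VH) : PHRow VP VH → ℝ
  | Sum.inl (i, j) =>
      if Rpp i j then (c.1 i - c.1 j) ⬝ᵥ (q.1 i - q.1 j) else 0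
  | Sum.inr (Sum.inl (i, j)) =>
      if Rph i j then c.1 i ⬝ᵥ (q.2 j).1 + q.1 i ⬝ᵥ (c.2 j).1 - (q.2 j).2 else 0
  | Sum.inr (Sum.inr (Sum.inl (i, j))) =>
      if Rhh i j then (c.2 i).1 ⬝ᵥ (q.2 j).1 + (q.2 i).1 ⬝ᵥ (c.2 j).1 else 0
  | Sum.inr (Sum.inr (Sum.inr j)) => (c.2 j).1 ⬝ᵥ (q.2 j).1

/-- The block-diagonal operator `T` determined by `S`: each point vertex gets the block
`S`, and each hyperplane vertex gets `S` augmented with a final row `(0,…,0,1)` and a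
final column `(0,…,0,1)ᵀ` (acting as `(a, r) ↦ (Sa, r)`). -/
def Tmap {d : ℕ} {VP VH : Type*} (S : Matrix (Fin d) (Fin d) ℝ)
    (c : PHCfg d VP VH) : PHCfg d VP VH :=
  (fun i => S.mulVec (c.1 i), fun j => (S.mulVec (c.2 j).1, (c.2 j).2))

/-- The rank of the rigidity matrix at configuration `c`. -/
noncomputable def phRank {d : ℕ} {VP VH : Type*}
    (Rpp : VP → VP → Prop) (Rph : VP → VH → Prop) (Rhh : VH → VH → Prop)
    (c : PHCfg d VP VH) : ℕ :=
  Module.finrank ℝ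
    (Submodule.span ℝ (Set.range (fun q : PHCfg d VP VH => phRig Rpp Rph Rhh c q)))



lemma skew_dot {d : ℕ} {S : Matrix (Fin d) (Fin d) ℝ} (hskew : Sᵀ = -S)
    (u v : Fin d → ℝ) : u ⬝ᵥ S.mulVec v = -(S.mulVec u ⬝ᵥ v) := by
  rw [Matrix.dotProduct_mulVec, ← Matrix.mulVec_transpose, hskew, Matrix.neg_mulVec,
    neg_dotProduct]

lemma key_dot {d : ℕ} {S : Matrix (Fin d) (Fin d) ℝ} (hskew : Sᵀ = -S) (lam : ℝ)
    (u v : Fin d → ℝ) :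
    (u + lam • S.mulVec u) ⬝ᵥ v = u ⬝ᵥ ((1 - lam • S).mulVec v) := by
  rw [Matrix.sub_mulVec, Matrix.one_mulVec, Matrix.smul_mulVec,
    dotProduct_sub, dotProduct_smul, skew_dot hskew,
    add_dotProduct, smul_dotProduct]
  simp [smul_eq_mul]


lemma key_dot2 {d : ℕ} {S : Matrix (Fin d) (Fin d) ℝ} (hskew : Sᵀ = -S) (lam : ℝ)
    (u v : Fin d → ℝ) :
    u ⬝ᵥ (v + lam • S.mulVec v) = ((1 - lam • S).mulVec u) ⬝ᵥ v := by
  rw [dotProduct_comm, key_dot hskew, dotProduct_comm]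

lemma rig_eq {d : ℕ} {VP VH : Type*}
    (Rpp : VP → VP → Prop) (Rph : VP → VH → Prop) (Rhh : VH → VH → Prop)
    (c : PHCfg d VP VH) {S : Matrix (Fin d) (Fin d) ℝ} (hskew : Sᵀ = -S) (lam : ℝ)
    (q : PHCfg d VP VH) :
    phRig Rpp Rph Rhh (c + lam • Tmap S c) q
      = phRig Rpp Rph Rhh c (Tmap (1 - lam • S) q) := by
  funext row
  obtain (⟨i, j⟩ | ⟨i, j⟩ | ⟨i, j⟩ | j) := row
  · simp only [phRig, Tmap, Prod.fst_add, Pi.add_apply, Prod.smul_fst, Pi.smul_apply]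
    split
    · rw [show c.1 i + lam • S.mulVec (c.1 i) - (c.1 j + lam • S.mulVec (c.1 j))
          = (c.1 i - c.1 j) + lam • S.mulVec (c.1 i - c.1 j) by
        rw [Matrix.mulVec_sub]; module,
        show (1 - lam • S).mulVec (q.1 i) - (1 - lam • S).mulVec (q.1 j)
          = (1 - lam • S).mulVec (q.1 i - q.1 j) by rw [Matrix.mulVec_sub],
        key_dot hskew]
    · rfl
  · simp only [phRig, Tmap, Prod.fst_add, Pi.add_apply, Prod.smul_fst, Pi.smul_apply,
      Prod.snd_add, Prod.smul_snd, Prod.fst_add, smul_eq_mul]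
    split
    · rw [key_dot hskew, key_dot2 hskew]
    · rfl
  · simp only [phRig, Tmap, Prod.snd_add, Pi.add_apply, Prod.smul_snd, Pi.smul_apply,
      Prod.fst_add, Prod.smul_fst]
    split
    · rw [key_dot hskew, key_dot2 hskew]
    · rfl
  · simp only [phRig, Tmap, Prod.snd_add, Pi.add_apply, Prod.smul_snd, Pi.smul_apply,
      Prod.fst_add, Prod.smul_fst]
    rw [key_dot hskew]

lemma mulVec_surj {d : ℕ} {S : Matrix (Fin d) (Fin d) ℝ} (hskew : Sᵀ = -S) (lam : ℝ) :
    Function.Surjective ((1 - lam • S).mulVec) := by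
  have hinj : Function.Injective ((1 - lam • S).mulVecLin) := by
    rw [injective_iff_map_eq_zero]
    intro y hy
    have h1 : y ⬝ᵥ (1 - lam • S).mulVec y = 0 := by
      rw [show (1 - lam • S).mulVec y = 0 from hy, dotProduct_zero]
    have h2 : y ⬝ᵥ S.mulVec y = 0 := by
      have h3 := skew_dot hskew y y
      have h4 : S.mulVec y ⬝ᵥ y = y ⬝ᵥ S.mulVec y := dotProduct_comm _ _
      linarith
    have h5 : y ⬝ᵥ y = 0 := by
      rw [Matrix.sub_mulVec, Matrix.one_mulVec, Matrix.smul_mulVec,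
        dotProduct_sub, dotProduct_smul, h2] at h1
      simpa using h1
    exact dotProduct_self_eq_zero.mp h5
  exact fun x => (LinearMap.injective_iff_surjective.mp hinj) x

lemma Tmap_surj {d : ℕ} {VP VH : Type*} {S : Matrix (Fin d) (Fin d) ℝ}
    (hskew : Sᵀ = -S) (lam : ℝ) :
    Function.Surjective (Tmap (1 - lam • S) : PHCfg d VP VH → PHCfg d VP VH) := by
  have hs := mulVec_surj hskew lam
  intro y
  refine ⟨(fun i => (hs (y.1 i)).choose, fun j => ((hs ((y.2 j).1)).choose, (y.2 j).2)), ?_⟩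
  refine Prod.ext ?_ ?_
  · funext i; exact (hs (y.1 i)).choose_spec
  · funext j; exact Prod.ext ((hs ((y.2 j).1)).choose_spec) rfl

/-- **Theorem 3.1**: the rank of the point-hyperplane rigidity matrix is locally
invariant under the infinitesimal rotations `I + λT`. -/
theorem rank_invariant_under_infinitesimal_rotation
    {d : ℕ} {VP VH : Type*} [Fintype VP] [Fintype VH]
    (Rpp : VP → VP → Prop) (Rph : VP → VH → Prop) (Rhh : VH → VH → Prop)
    (c : PHCfg d VP VH)
    (S : Matrix (Fin d) (Fin d) ℝ) (hskew : Sᵀ = -S) (hinv : IsUnit S.det) :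
    ∃ lc : ℝ, 0 < lc ∧ ∀ lam : ℝ, |lam| < lc →
      phRank Rpp Rph Rhh (c + lam • Tmap S c) = phRank Rpp Rph Rhh c := by

  refine ⟨1, one_pos, fun lam _ => ?_⟩
  have hrange : Set.range (fun q : PHCfg d VP VH => phRig Rpp Rph Rhh (c + lam • Tmap S c) q)
      = Set.range (fun q : PHCfg d VP VH => phRig Rpp Rph Rhh c q) := by
    ext f
    constructor
    · rintro ⟨q, rfl⟩
      exact ⟨Tmap (1 - lam • S) q, (rig_eq Rpp Rph Rhh c hskew lam q).symm⟩
    · rintro ⟨q, rfl⟩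
      obtain ⟨q0, hq0⟩ := Tmap_surj (VP := VP) (VH := VH) hskew lam q
      exact ⟨q0, by simp only []; rw [rig_eq Rpp Rph Rhh c hskew lam q0, hq0]⟩
  unfold phRank
  rw [hrange]
end

section
/- Let G = H □ K₂^{□t} with t ≥ 1 and let (G,p) be a bar-joint framework in ℝ^d (d ≥ 2) with t-fold extrusion symmetry, whose points affinely span ℝ^d. Then (G,p) has a non-trivial infinitesimal motion (an infinitesimal flex); in particular, a bar-joint framework with t-fold extrusion symmetry can never be isostatic. -/
/-!
STATEMENT 12: A bar-joint framework `(G,p)` in `ℝ^d` (`d ≥ 2`) with `t`-fold extrusion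
symmetry (`t ≥ 1`, `G = H □ K₂^{□t}`), whose points affinely span `ℝ^d`, always has a
non-trivial infinitesimal motion (an infinitesimal flex); in particular it is never
infinitesimally rigid, hence never isostatic.
-/

open Matrix
open scoped Classical

/-- A trivial infinitesimal motion: `q i = S pᵢ + tv` for a skew-symmetric `S` and a
translation vector `tv`. -/
def IsTrivialMotionBJ {V : Type*} {d : ℕ} (p q : V → Fin d → ℝ) : Prop :=
  ∃ (S : Matrix (Fin d) (Fin d) ℝ) (tv : Fin d → ℝ),
    Sᵀ = -S ∧ ∀ i, q i = S.mulVec (p i) + tv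

lemma sum_dotProduct' {d : ℕ} {ι : Type*} (s : Finset ι) (f : ι → Fin d → ℝ) (x : Fin d → ℝ) :
    (∑ k ∈ s, f k) ⬝ᵥ x = ∑ k ∈ s, f k ⬝ᵥ x := by
  simp only [dotProduct, Finset.sum_apply, Finset.sum_mul]
  exact Finset.sum_comm

/-- A bar-joint framework with `t`-fold extrusion symmetry always has an infinitesimal
flex (so it can never be isostatic). -/
theorem extrusion_symmetric_has_flex
    {VH : Type*} [Fintype VH] {t d : ℕ} (ht : 1 ≤ t) (hd : 2 ≤ d)
    (Adj : VH → VH → Prop) (hAdjSymm : ∀ u v, Adj u v → Adj v u)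
    (τ : Fin t → Fin d → ℝ) (p : Vert VH t → Fin d → ℝ)
    (hp : ExtrusionSymmetric τ p)
    (hspan : affineSpan ℝ (Set.range p) = ⊤) :
    ∃ q : Vert VH t → Fin d → ℝ,
      (∀ i j, ExtAdj Adj i j → (p i - p j) ⬝ᵥ (q i - q j) = 0) ∧
      ¬ IsTrivialMotionBJ p q := by
  -- setup
  set h0 : Fin t := ⟨0, ht⟩ with hh0
  set u : Fin d → ℝ := τ h0 with hu
  -- choose an index where u is nonzero
  obtain ⟨i0, hi0⟩ : ∃ a, u a ≠ 0 := Function.ne_iff.mp (hp.1 h0)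
  -- choose another index
  haveI : Nontrivial (Fin d) := by
    obtain ⟨d', rfl⟩ : ∃ d', d = d' + 2 := ⟨d - 2, by omega⟩
    exact inferInstance
  obtain ⟨j0, hj0⟩ := exists_ne i0
  -- the perpendicular direction
  set w : Fin d → ℝ := fun k => if k = j0 then -(u i0) else if k = i0 then u j0 else 0 with hwdef
  have hwne : w ≠ 0 := by
    intro hcon
    have := congrFun hcon j0
    simp [hwdef] at this
    exact hi0 this
  have huw : u ⬝ᵥ w = 0 := by
    have split : ∀ k : Fin d, u k * w k =
        (if k = j0 then -(u j0 * u i0) else 0) + (if k = i0 then u i0 * u j0 else 0) := by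
      intro k
      by_cases hk : k = j0
      · subst hk; simp [hwdef, hj0]
      · by_cases hk' : k = i0
        · subst hk'; simp [hwdef, hk]
        · simp [hwdef, hk, hk']
    simp only [dotProduct, split, Finset.sum_add_distrib,
      Finset.sum_ite_eq', Finset.mem_univ, if_pos]
    ring
  -- the flex
  refine ⟨fun ij => (((ij.2 h0).val : ℝ)) • w, ?_, ?_⟩
  · -- edge condition
    intro i j hij
    beta_reduce
    rcases hij with ⟨-, he⟩ | ⟨hv, h, hne, hoth⟩
    · rw [he, sub_self, dotProduct_zero]
    · -- extrusion edge
      set c : Fin t → ℝ := fun k => ((i.2 k).val : ℝ) - ((j.2 k).val : ℝ) with hc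
      have hpij : p i - p j = ∑ k, c k • τ k := by
        have h1 : p i = p (i.1, 0) + ∑ k, (((i.2 k).val : ℝ)) • τ k := by
          have := hp.2 i.1 i.2; rwa [Prod.mk.eta] at this
        have h2 : p j = p (j.1, 0) + ∑ k, (((j.2 k).val : ℝ)) • τ k := by
          have := hp.2 j.1 j.2; rwa [Prod.mk.eta] at this
        rw [h1, h2, hv]
        rw [add_sub_add_left_eq_sub, ← Finset.sum_sub_distrib]
        exact Finset.sum_congr rfl fun k _ => by rw [hc, sub_smul]
      have hqij : (((i.2 h0).val : ℝ)) • w - (((j.2 h0).val : ℝ)) • w = c h0 • w := by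
        rw [hc, sub_smul]
      rw [hpij, hqij, sum_dotProduct']
      refine Finset.sum_eq_zero fun k _ => ?_
      rw [smul_dotProduct, dotProduct_smul]
      by_cases hkh : k = h
      · by_cases hk0 : h = h0
        · have hτw : τ k ⬝ᵥ w = 0 := by rw [hkh, hk0]; exact huw
          rw [hτw]; simp
        · have h0h : h0 ≠ h := fun e => hk0 e.symm
          have : c h0 = 0 := by simp [hc, hoth h0 h0h]
          rw [this]; simp
      · have : c k = 0 := by simp [hc, hoth k hkh]
        rw [this]; simp
  · -- nontriviality
    rintro ⟨S, tv, hS, hq⟩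
    -- VH is nonempty
    have hne : Nonempty VH := by
      by_contra hcon
      rw [not_nonempty_iff] at hcon
      rw [Set.range_eq_empty p, AffineSubspace.span_empty] at hspan
      have : (0 : Fin d → ℝ) ∈ (⊥ : AffineSubspace ℝ (Fin d → ℝ)) := by
        rw [hspan]; trivial
      exact this
    obtain ⟨v⟩ := hne
    -- the unit vector δ in direction h0
    set δ : Zkt t := fun k => if k = h0 then 1 else 0 with hδ
    have hδsum : ∑ k, (((δ k).val : ℝ)) • τ k = u := by
      rw [Finset.sum_eq_single h0]
      · simp [hδ, hu, show (1:ZMod 2).val = 1 from rfl]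
      · intro b _ hb; simp [hδ, hb]
      · intro hb; exact absurd (Finset.mem_univ h0) hb
    have hpδ : p (v, δ) = p (v, 0) + u := by rw [hp.2 v δ, hδsum]
    have hq0 : (fun ij : Vert VH t => (((ij.2 h0).val : ℝ)) • w) (v, (0 : Zkt t)) = 0 := by
      simp
    have hqδ : (fun ij : Vert VH t => (((ij.2 h0).val : ℝ)) • w) (v, δ) = w := by
      simp [hδ, show (1:ZMod 2).val = 1 from rfl]
    have hw : w = S.mulVec u := by
      have e1 := hq (v, δ)
      have e2 := hq (v, (0 : Zkt t))
      simp only [hqδ, hq0] at e1 e2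
      rw [hpδ, Matrix.mulVec_add] at e1
      rw [e1, add_right_comm, ← e2, zero_add]
    -- the affine functional x ↦ u ⬝ᵥ (S.mulVec x + tv) vanishes on range p
    set L : (Fin d → ℝ) →ₗ[ℝ] ℝ :=
      { toFun := fun x => u ⬝ᵥ S.mulVec x
        map_add' := fun x y => by beta_reduce; rw [Matrix.mulVec_add, dotProduct_add]
        map_smul' := fun r x => by simp [Matrix.mulVec_smul] } with hL
    set f : (Fin d → ℝ) →ᵃ[ℝ] ℝ :=
      L.toAffineMap + AffineMap.const ℝ (Fin d → ℝ) (u ⬝ᵥ tv) with hf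
    have hfap : ∀ x, f x = u ⬝ᵥ S.mulVec x + u ⬝ᵥ tv := fun x => rfl
    have hvanish : ∀ i, f (p i) = 0 := by
      intro i
      rw [hfap, ← dotProduct_add, ← hq i]
      rw [dotProduct_smul, huw]
      simp
    have hall : ∀ x, f x = 0 := by
      have hle : affineSpan ℝ (Set.range p) ≤
          AffineSubspace.comap f (AffineSubspace.mk' (0 : ℝ) ⊥) := by
        rw [affineSpan_le]
        rintro x ⟨i, rfl⟩
        rw [SetLike.mem_coe, AffineSubspace.mem_comap, AffineSubspace.mem_mk']
        simp [hvanish i]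
      rw [hspan] at hle
      intro x
      have hx : x ∈ AffineSubspace.comap f (AffineSubspace.mk' (0 : ℝ) ⊥) := hle trivial
      rw [AffineSubspace.mem_comap, AffineSubspace.mem_mk'] at hx
      simpa using hx
    have htv : u ⬝ᵥ tv = 0 := by
      have := hall 0
      rw [hfap] at this
      simpa using this
    have hlin : ∀ x, u ⬝ᵥ S.mulVec x = 0 := by
      intro x
      have := hall x
      rw [hfap, htv, add_zero] at this
      exact this
    -- conclude w = 0, a contradiction
    have hww : w ⬝ᵥ w = 0 := by
      have hS' : S = -Sᵀ := by rw [hS, neg_neg]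
      calc w ⬝ᵥ w = w ⬝ᵥ S.mulVec u := by rw [← hw]
        _ = (w ᵥ* S) ⬝ᵥ u := Matrix.dotProduct_mulVec w S u
        _ = (w ᵥ* (-Sᵀ)) ⬝ᵥ u := by rw [← hS']
        _ = -((w ᵥ* Sᵀ) ⬝ᵥ u) := by rw [Matrix.vecMul_neg, neg_dotProduct]
        _ = -((S.mulVec w) ⬝ᵥ u) := by rw [Matrix.vecMul_transpose]
        _ = -(u ⬝ᵥ S.mulVec w) := by rw [dotProduct_comm]
        _ = 0 := by rw [hlin w, neg_zero]
    exact hwne (dotProduct_self_eq_zero.mp hww)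
end
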